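/- arXiv:1110.5425 — 3 statements merged into one kernel-verified Lean document; each statement's English description precedes it below -/
import Mathlib

section
/- Under the gluing setup with crossing data, the signed generating function of even subsets factorizes through the cut: Σ_{F ⊆ E even} (−1)^{m(F)} ∏_{e∈F} x_e = Σ_{A ⊆ C} N1^q(A)·N2^q(A), where for j = 1,2, Nj^q(A) = Σ_{F ⊆ Ej with boundary pattern A} (−1)^{m(F)} ∏_{e∈F} x_e. (This is Theorem 3.3 of the paper, the signed Ising gluing formula E(G,q,x) = ⟨E(G1^S, q1, y1), E(G2^S, q2, y2)⟩, after the sign (−1)^{q([F])} of the quadratic form q is expressed combinatorially via Theorem 3.2 as (−1)^{m(F)}.) -/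
open Finset

/-- Degree of the vertex `v` in the graph `(V, F)`: each edge `e ∈ F` contributes `1` for each
of its two (ordered) endpoints equal to `v`; in particular a loop at `v` contributes `2`. -/
def degIn {V E : Type*} [DecidableEq V] (ends : E → V × V) (F : Finset E) (v : V) : ℕ :=
  ∑ e ∈ F, ((if (ends e).1 = v then 1 else 0) + (if (ends e).2 = v then 1 else 0))

/-- The quadratic-form exponent `m(F) = R1(F)·R2(F) + R3(F)·R4(F) + Σ_i Ri(F)·εi ∈ ℤ/2`,
where `Ri(F) = Σ_{e∈F} ri(e)`. -/
def mExp {E : Type*} [DecidableEq E] (r : E → Fin 4 → ZMod 2) (ε : Fin 4 → ZMod 2)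
    (F : Finset E) : ZMod 2 :=
  (∑ e ∈ F, r e 0) * (∑ e ∈ F, r e 1) + (∑ e ∈ F, r e 2) * (∑ e ∈ F, r e 3) +
    ∑ i : Fin 4, (∑ e ∈ F, r e i) * ε i

/-!
An edge set `F ⊆ E` splits uniquely as `F₁ ∪ F₂` with `Fᵢ ⊆ Eᵢ`. Edges of `E₁` avoid `V₂` and
edges of `E₂` avoid `V₁`, so `F` is even iff `F₁` is even on `V₁`, `F₂` is even on `V₂`, and `F₁`,
`F₂` have the same set `A` of odd-degree vertices on the cut `C`. The crossing vectors of `E₁` and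
`E₂` are supported on complementary pairs of coordinates, so the cross terms of `m` vanish and
`m(F₁ ∪ F₂) = m(F₁) + m(F₂)`: the signed weight is multiplicative, and grouping the pairs
`(F₁, F₂)` by `A` gives the factorization.
-/

theorem sum_powerset_union_of_disjoint {E M : Type*} [DecidableEq E] [AddCommMonoid M]
    {s t : Finset E} (h : Disjoint s t) (f : Finset E → M) :
    ∑ F ∈ (s ∪ t).powerset, f F = ∑ F₁ ∈ s.powerset, ∑ F₂ ∈ t.powerset, f (F₁ ∪ F₂) := by
  rw [← sum_product']
  refine sum_bij' (fun F _ => (F ∩ s, F ∩ t)) (fun p _ => p.1 ∪ p.2) ?_ ?_ ?_ ?_ ?_ <;>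
    simp only [mem_product, mem_powerset]
  · exact fun _ _ => ⟨inter_subset_right, inter_subset_right⟩
  · exact fun p hp => union_subset_union hp.1 hp.2
  · intro F hF
    rw [← inter_union_distrib_left, inter_eq_left.mpr hF]
  · rintro ⟨F₁, F₂⟩ ⟨h₁, h₂⟩
    simp only [union_inter_distrib_right, inter_eq_left.mpr h₁, inter_eq_left.mpr h₂,
      disjoint_iff_inter_eq_empty.mp (h.mono_left h₁),
      disjoint_iff_inter_eq_empty.mp (h.symm.mono_left h₂), union_empty, empty_union]
  · intro F hF
    rw [← inter_union_distrib_left, inter_eq_left.mpr hF]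

theorem sum_mul_sum_fiberwise {ι κ β R : Type*} [DecidableEq β] [CommSemiring R]
    {s : Finset ι} {t : Finset κ} {u : Finset β} {φ : ι → β} (ψ : κ → β)
    (hφ : ∀ i ∈ s, φ i ∈ u) (f : ι → R) (g : κ → R) :
    ∑ b ∈ u, (∑ i ∈ s with φ i = b, f i) * ∑ j ∈ t with ψ j = b, g j =
      ∑ i ∈ s, ∑ j ∈ t with ψ j = φ i, f i * g j := by
  rw [← sum_fiberwise_of_maps_to hφ]
  refine sum_congr rfl fun b _ => ?_
  rw [sum_mul]
  refine sum_congr rfl fun i hi => ?_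
  rw [(mem_filter.mp hi).2, mul_sum]

theorem sum_filter_sum_filter {ι κ M : Type*} [AddCommMonoid M] (s : Finset ι) (t : Finset κ)
    (p : ι → Prop) (q : ι → κ → Prop) [DecidablePred p] [∀ i, DecidablePred (q i)]
    (f : ι → κ → M) :
    ∑ i ∈ s with p i, ∑ j ∈ t with q i j, f i j =
      ∑ i ∈ s, ∑ j ∈ t, if p i ∧ q i j then f i j else 0 := by
  simp [sum_filter, ite_and]

theorem filter_eq_iff_forall_mem_iff {V : Type*} {C A : Finset V} (hA : A ⊆ C) (p : V → Prop)
    [DecidablePred p] : C.filter p = A ↔ ∀ v ∈ C, (p v ↔ v ∈ A) := by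
  classical
  rw [← filter_inj', filter_mem_eq_of_subset hA]

theorem neg_one_pow_val_add {R : Type*} [Ring R] (a b : ZMod 2) :
    (-1 : R) ^ (a + b).val = (-1) ^ a.val * (-1) ^ b.val := by
  rw [ZMod.val_add, ← neg_one_pow_eq_pow_mod_two, pow_add]

theorem mExp_union {E : Type*} [DecidableEq E] (r : E → Fin 4 → ZMod 2) (ε : Fin 4 → ZMod 2)
    {F₁ F₂ : Finset E} (hd : Disjoint F₁ F₂)
    (h₁ : ∀ e ∈ F₁, r e 2 = 0 ∧ r e 3 = 0) (h₂ : ∀ e ∈ F₂, r e 0 = 0 ∧ r e 1 = 0) :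
    mExp r ε (F₁ ∪ F₂) = mExp r ε F₁ + mExp r ε F₂ := by
  have hR₁₂ : ∑ e ∈ F₁, r e 2 = 0 := sum_eq_zero fun e he => (h₁ e he).1
  have hR₁₃ : ∑ e ∈ F₁, r e 3 = 0 := sum_eq_zero fun e he => (h₁ e he).2
  have hR₂₀ : ∑ e ∈ F₂, r e 0 = 0 := sum_eq_zero fun e he => (h₂ e he).1
  have hR₂₁ : ∑ e ∈ F₂, r e 1 = 0 := sum_eq_zero fun e he => (h₂ e he).2
  simp only [mExp, Fin.sum_univ_four, sum_union hd, hR₁₂, hR₁₃, hR₂₀, hR₂₁]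
  ring

theorem neg_one_pow_mExp_mul_prod_union {E R : Type*} [DecidableEq E] [CommRing R]
    (r : E → Fin 4 → ZMod 2) (ε : Fin 4 → ZMod 2) (x : E → R)
    {F₁ F₂ : Finset E} (hd : Disjoint F₁ F₂)
    (h₁ : ∀ e ∈ F₁, r e 2 = 0 ∧ r e 3 = 0) (h₂ : ∀ e ∈ F₂, r e 0 = 0 ∧ r e 1 = 0) :
    (-1 : R) ^ (mExp r ε (F₁ ∪ F₂)).val * ∏ e ∈ F₁ ∪ F₂, x e =
      ((-1) ^ (mExp r ε F₁).val * ∏ e ∈ F₁, x e) * ((-1) ^ (mExp r ε F₂).val * ∏ e ∈ F₂, x e) := by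
  rw [mExp_union r ε hd h₁ h₂, neg_one_pow_val_add, prod_union hd]
  ring

section Degree

variable {V E : Type*} [DecidableEq V] (ends : E → V × V)

theorem degIn_union [DecidableEq E] {F₁ F₂ : Finset E} (h : Disjoint F₁ F₂) (v : V) :
    degIn ends (F₁ ∪ F₂) v = degIn ends F₁ v + degIn ends F₂ v :=
  sum_union h

theorem degIn_eq_zero_of_notMem {S : Finset V} {F : Finset E}
    (hF : ∀ e ∈ F, (ends e).1 ∈ S ∧ (ends e).2 ∈ S) {v : V} (hv : v ∉ S) :
    degIn ends F v = 0 :=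
  sum_eq_zero fun e he => by
    simp [ne_of_mem_of_not_mem (hF e he).1 hv, ne_of_mem_of_not_mem (hF e he).2 hv]

def oddVerts (C : Finset V) (F : Finset E) : Finset V :=
  C.filter fun v => Odd (degIn ends F v)

theorem even_degIn_union_iff [Fintype V] [DecidableEq E] {V₁ V₂ C : Finset V}
    (hV : V₁ ∪ V₂ ∪ C = univ) {F₁ F₂ : Finset E} (hF : Disjoint F₁ F₂)
    (h₁ : ∀ v ∈ V₂, degIn ends F₁ v = 0) (h₂ : ∀ v ∈ V₁, degIn ends F₂ v = 0) :
    (∀ v, Even (degIn ends (F₁ ∪ F₂) v)) ↔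
      (∀ v ∈ V₁, Even (degIn ends F₁ v)) ∧ (∀ v ∈ V₂, Even (degIn ends F₂ v)) ∧
        oddVerts ends C F₂ = oddVerts ends C F₁ := by
  simp only [degIn_union ends hF, oddVerts, filter_inj', ← Nat.not_even_iff_odd, not_iff_not]
  constructor
  · intro h
    exact ⟨fun v hv => by simpa [h₂ v hv] using h v, fun v hv => by simpa [h₁ v hv] using h v,
      fun v _ => (Nat.even_add.mp (h v)).symm⟩
  · rintro ⟨he₁, he₂, hC⟩ v
    have hv : v ∈ V₁ ∪ V₂ ∪ C := hV ▸ mem_univ v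
    rcases mem_union.mp hv with hv | hv
    · rcases mem_union.mp hv with hv | hv
      · simpa [h₂ v hv] using he₁ v hv
      · simpa [h₁ v hv] using he₂ v hv
    · exact Nat.even_add.mpr (hC hv).symm

end Degree

open scoped Classical in
theorem signed_even_subsets_gluing_general {V E : Type*} [Fintype V] [DecidableEq V]
    [Fintype E] [DecidableEq E] {R : Type*} [CommRing R]
    (V1 V2 C : Finset V)
    (hd12 : Disjoint V1 V2) (hd1C : Disjoint V1 C) (hd2C : Disjoint V2 C)
    (hVunion : V1 ∪ V2 ∪ C = Finset.univ)
    (E1 E2 : Finset E) (hdE : Disjoint E1 E2) (hEunion : E1 ∪ E2 = Finset.univ)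
    (ends : E → V × V)
    (hE1 : ∀ e ∈ E1, (ends e).1 ∈ V1 ∪ C ∧ (ends e).2 ∈ V1 ∪ C)
    (hE2 : ∀ e ∈ E2, (ends e).1 ∈ V2 ∪ C ∧ (ends e).2 ∈ V2 ∪ C)
    (x : E → R)
    (r : E → Fin 4 → ZMod 2) (ε : Fin 4 → ZMod 2)
    (hr1 : ∀ e ∈ E1, r e 2 = 0 ∧ r e 3 = 0)
    (hr2 : ∀ e ∈ E2, r e 0 = 0 ∧ r e 1 = 0) :
    (∑ F ∈ Finset.univ.powerset.filter (fun F : Finset E => ∀ v : V, Even (degIn ends F v)),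
        (-1 : R) ^ (mExp r ε F).val * ∏ e ∈ F, x e) =
      ∑ A ∈ C.powerset,
        (∑ F ∈ E1.powerset.filter (fun F : Finset E =>
            (∀ v ∈ V1, Even (degIn ends F v)) ∧ ∀ v ∈ C, (Odd (degIn ends F v) ↔ v ∈ A)),
          (-1 : R) ^ (mExp r ε F).val * ∏ e ∈ F, x e) *
        ∑ F ∈ E2.powerset.filter (fun F : Finset E =>
            (∀ v ∈ V2, Even (degIn ends F v)) ∧ ∀ v ∈ C, (Odd (degIn ends F v) ↔ v ∈ A)),
          (-1 : R) ^ (mExp r ε F).val * ∏ e ∈ F, x e := by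
  set w : Finset E → R := fun F => (-1 : R) ^ (mExp r ε F).val * ∏ e ∈ F, x e
  set S₁ := E1.powerset.filter fun F => ∀ v ∈ V1, Even (degIn ends F v)
  set S₂ := E2.powerset.filter fun F => ∀ v ∈ V2, Even (degIn ends F v)
  have hdeg₁ : ∀ F ⊆ E1, ∀ v ∈ V2, degIn ends F v = 0 := fun F hF v hv =>
    degIn_eq_zero_of_notMem ends (fun e he => hE1 e (hF he))
      (by simp [disjoint_right.mp hd12 hv, disjoint_left.mp hd2C hv])
  have hdeg₂ : ∀ F ⊆ E2, ∀ v ∈ V1, degIn ends F v = 0 := fun F hF v hv =>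
    degIn_eq_zero_of_notMem ends (fun e he => hE2 e (hF he))
      (by simp [disjoint_left.mp hd12 hv, disjoint_left.mp hd1C hv])
  calc ∑ F ∈ univ.powerset with ∀ v, Even (degIn ends F v), w F
      = ∑ F₁ ∈ E1.powerset, ∑ F₂ ∈ E2.powerset,
          if (∀ v ∈ V1, Even (degIn ends F₁ v)) ∧ ((∀ v ∈ V2, Even (degIn ends F₂ v)) ∧
            oddVerts ends C F₂ = oddVerts ends C F₁) then w F₁ * w F₂ else 0 := by
        rw [sum_filter, ← hEunion, sum_powerset_union_of_disjoint hdE]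
        refine sum_congr rfl fun F₁ hF₁ => sum_congr rfl fun F₂ hF₂ => ?_
        rw [mem_powerset] at hF₁ hF₂
        simp only [w,
          even_degIn_union_iff ends hVunion (hdE.mono hF₁ hF₂) (hdeg₁ F₁ hF₁) (hdeg₂ F₂ hF₂),
          neg_one_pow_mExp_mul_prod_union r ε x (hdE.mono hF₁ hF₂)
            (fun e he => hr1 e (hF₁ he)) (fun e he => hr2 e (hF₂ he))]
    _ = ∑ F₁ ∈ S₁, ∑ F₂ ∈ S₂ with oddVerts ends C F₂ = oddVerts ends C F₁, w F₁ * w F₂ := by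
        simp only [S₁, S₂, filter_filter, sum_filter_sum_filter]
    _ = ∑ A ∈ C.powerset, (∑ F₁ ∈ S₁ with oddVerts ends C F₁ = A, w F₁) *
          ∑ F₂ ∈ S₂ with oddVerts ends C F₂ = A, w F₂ :=
        (sum_mul_sum_fiberwise _ (fun F _ => mem_powerset.mpr (filter_subset _ _)) _ _).symm
    _ = _ := by
        refine sum_congr rfl fun A hA => ?_
        simp only [S₁, S₂, filter_filter, oddVerts,
          filter_eq_iff_forall_mem_iff (mem_powerset.mp hA)]

open scoped Classical in
/-- Theorem 3.3 of the paper, signs expressed via Theorem 3.2: under the gluing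
setup with crossing data, the signed generating function of even subsets factorizes through
the cut: `Σ_{F ⊆ E even} (−1)^{m(F)} ∏_{e∈F} x_e = Σ_{A ⊆ C} N1^q(A)·N2^q(A)`. -/
theorem signed_even_subsets_gluing {V E : Type*} [Fintype V] [DecidableEq V]
    [Fintype E] [DecidableEq E] {R : Type*} [CommRing R]
    (V1 V2 C : Finset V)
    (hd12 : Disjoint V1 V2) (hd1C : Disjoint V1 C) (hd2C : Disjoint V2 C)
    (hVunion : V1 ∪ V2 ∪ C = Finset.univ)
    (hCeven : Even C.card) (hV1even : Even V1.card) (hV2even : Even V2.card)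
    (E1 E2 : Finset E) (hdE : Disjoint E1 E2) (hEunion : E1 ∪ E2 = Finset.univ)
    (ends : E → V × V)
    (hE1 : ∀ e ∈ E1, (ends e).1 ∈ V1 ∪ C ∧ (ends e).2 ∈ V1 ∪ C)
    (hE2 : ∀ e ∈ E2, (ends e).1 ∈ V2 ∪ C ∧ (ends e).2 ∈ V2 ∪ C)
    (x : E → R)
    (r : E → Fin 4 → ZMod 2) (ε : Fin 4 → ZMod 2)
    (hr1 : ∀ e ∈ E1, r e 2 = 0 ∧ r e 3 = 0)
    (hr2 : ∀ e ∈ E2, r e 0 = 0 ∧ r e 1 = 0) :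
    (∑ F ∈ Finset.univ.powerset.filter (fun F : Finset E => ∀ v : V, Even (degIn ends F v)),
        (-1 : R) ^ (mExp r ε F).val * ∏ e ∈ F, x e) =
      ∑ A ∈ C.powerset,
        (∑ F ∈ E1.powerset.filter (fun F : Finset E =>
            (∀ v ∈ V1, Even (degIn ends F v)) ∧ ∀ v ∈ C, (Odd (degIn ends F v) ↔ v ∈ A)),
          (-1 : R) ^ (mExp r ε F).val * ∏ e ∈ F, x e) *
        ∑ F ∈ E2.powerset.filter (fun F : Finset E =>
            (∀ v ∈ V2, Even (degIn ends F v)) ∧ ∀ v ∈ C, (Odd (degIn ends F v) ↔ v ∈ A)),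
          (-1 : R) ^ (mExp r ε F).val * ∏ e ∈ F, x e :=
  signed_even_subsets_gluing_general V1 V2 C hd12 hd1C hd2C hVunion E1 E2 hdE hEunion ends hE1 hE2 x
    r ε hr1 hr2
end

section
/- Let k ≥ 1 and let S′ be the core graph: the simple graph with vertices u_1, …, u_{6k} and w_i, t_i for i = 1, …, k, and edges {u_j, u_{j+1}} for 1 ≤ j < 6k, {u_{3j−2}, u_{3j}} for 1 ≤ j ≤ 2k, and {u_{6i−4}, w_i}, {w_i, t_i} for 1 ≤ i ≤ k. Then for every subset A ⊆ {t_1, …, t_k}: if |A| is even, there is exactly one matching of S′ (a set of pairwise non-adjacent edges) covering every vertex of S′ not in A exactly once and covering no vertex of A; and if |A| is odd, there is no such matching. (This is Observation 3.4 of the paper.) -/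
open Finset

/-- Vertices of the core graph `S′`: the `u_1, …, u_{6k}` (left), the `w_1, …, w_k`
(middle) and the `t_1, …, t_k` (right). -/
abbrev CoreVert (k : ℕ) := Fin (6 * k) ⊕ (Fin k ⊕ Fin k)

/-- Edges of the core graph `S′`: the path edges `{u_j, u_{j+1}}` (`1 ≤ j < 6k`), the chords
`{u_{3j−2}, u_{3j}}` (`1 ≤ j ≤ 2k`), the edges `{u_{6i−4}, w_i}` and the edges `{w_i, t_i}`
(`1 ≤ i ≤ k`). -/
abbrev CoreEdge (k : ℕ) := (Fin (6 * k - 1) ⊕ Fin (2 * k)) ⊕ (Fin k ⊕ Fin k)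

/-- The two endpoints of each edge of the core graph `S′` (indices are `0`-based). -/
def coreEnds (k : ℕ) : CoreEdge k → CoreVert k × CoreVert k
  | Sum.inl (Sum.inl j) =>
      (Sum.inl ⟨j.val, by have := j.isLt; omega⟩,
       Sum.inl ⟨j.val + 1, by have := j.isLt; omega⟩)
  | Sum.inl (Sum.inr j) =>
      (Sum.inl ⟨3 * j.val, by have := j.isLt; omega⟩,
       Sum.inl ⟨3 * j.val + 2, by have := j.isLt; omega⟩)
  | Sum.inr (Sum.inl i) =>
      (Sum.inl ⟨6 * i.val + 1, by have := i.isLt; omega⟩, Sum.inr (Sum.inl i))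
  | Sum.inr (Sum.inr i) => (Sum.inr (Sum.inl i), Sum.inr (Sum.inr i))

/-!
The degree condition at `t_i` forces `w_i t_i ∈ M ↔ i ∉ A`, and then the one at `w_i` forces
`u_{6i-4} w_i ∈ M ↔ i ∈ A`. What is left is the path `u_1 … u_{6k}` cut into `2k` triangles
(blocks) `u_{3b+1} u_{3b+2} u_{3b+3}`; the middle vertex `u_{6i-4}` of every other block is
already covered when `i ∈ A`. Scanning the blocks from left to right, the path edge entering a
block (the carry) determines everything inside it: the three degree equations of a block have
exactly one solution, and the carry leaving it is set iff the entering carry and the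
covered-middle bit agree.
So the matching is forced, and it exists iff no carry leaves the last block; since the carry
entering every other block is the parity of the number of covered middle vertices before it,
this happens iff `|A|` is even.
-/

lemma degIn_eq_sum {V E : Type*} [DecidableEq V] [Fintype E] [DecidableEq E]
    (ends : E → V × V) (F : Finset E) (v : V) :
    degIn ends F v = ∑ e, ((if e ∈ F ∧ (ends e).1 = v then 1 else 0) +
      (if e ∈ F ∧ (ends e).2 = v then 1 else 0)) := by
  simp only [degIn, ite_and, ← ite_add_zero, sum_ite_mem, univ_inter]

/-- A triangle with edges `x = v₀v₁`, `y = v₁v₂`, `z = v₀v₂` and one outside edge at each corner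
(`a` at `v₀`, `r` at `v₁`, `c` at `v₂`). -/
lemma triangle_degree_eq_one_iff (a r x y z c : Bool) :
    (a.toNat + x.toNat + z.toNat = 1 ∧ x.toNat + y.toNat + r.toNat = 1 ∧
        y.toNat + z.toNat + c.toNat = 1) ↔
      (x = (!a && !r) ∧ y = (a && !r) ∧ z = (!a && r) ∧ c = (a == r)) := by
  revert a r x y z c
  decide

section natBit
variable {n : ℕ} (q : Fin n → Prop) [DecidablePred q]

/-- Padding `q` with `false` beyond `n` lets the degree formulas below do plain `ℕ` arithmetic on
edge indices, without bound proofs. -/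
def natBit (j : ℕ) : Bool := if h : j < n then decide (q ⟨j, h⟩) else false

lemma natBit_val (x : Fin n) : natBit q x = decide (q x) := by simp [natBit]

lemma natBit_of_le {j : ℕ} (h : n ≤ j) : natBit q j = false := by
  simp [natBit, not_lt.mpr h]

lemma natBit_eq_natBit_iff (q' : Fin n → Prop) [DecidablePred q'] :
    natBit q = natBit q' ↔ ∀ x, q x ↔ q' x := by
  refine ⟨fun h x => by simpa [natBit_val] using congrFun h x, fun h => funext fun j => ?_⟩
  by_cases hj : j < n
  · simpa [natBit, hj] using h ⟨j, hj⟩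
  · simp [natBit, hj]

lemma sum_natBit_toNat : ∑ j ∈ range n, (natBit q j).toNat = #{x | q x} := by
  rw [← Fin.sum_univ_eq_sum_range (fun j => (natBit q j).toNat), card_eq_sum_ones, sum_filter]
  exact sum_congr rfl fun x _ => by by_cases hx : q x <;> simp [natBit_val, hx]

lemma sum_ite_and_eq {φ : ℕ → ℕ} {m j₀ : ℕ} {P : Prop} [Decidable P]
    (hφ : ∀ x, φ x = m ↔ P ∧ x = j₀) :
    ∑ x : Fin n, (if q x ∧ φ x = m then 1 else 0) = (decide P && natBit q j₀).toNat := by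
  by_cases hj : P ∧ j₀ < n
  · rw [Fintype.sum_eq_single ⟨j₀, hj.2⟩
      fun x hx => if_neg fun h => hx (Fin.ext ((hφ x).1 h.2).2)]
    by_cases hq : q ⟨j₀, hj.2⟩ <;> simp [hφ, hj, natBit, hq]
  · rw [sum_eq_zero fun x _ => if_neg fun h => hj ?_]
    · rcases not_and_or.mp hj with hP | hn
      · simp [hP]
      · simp [natBit_of_le q (not_lt.mp hn)]
    · obtain ⟨hP, rfl⟩ := (hφ x).1 h.2
      exact ⟨hP, x.isLt⟩

lemma sum_ite_and_val_eq (m : ℕ) :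
    ∑ x : Fin n, (if q x ∧ x.val = m then 1 else 0) = (natBit q m).toNat := by
  simpa using sum_ite_and_eq q (φ := fun x => x) (P := True) (j₀ := m) (by simp)

end natBit

section degrees
variable {k : ℕ} (M : Finset (CoreEdge k))

def pathBit : ℕ → Bool := natBit fun j => .inl (.inl j) ∈ M

def chordBit : ℕ → Bool := natBit fun b => .inl (.inr b) ∈ M

def uwBit : ℕ → Bool := natBit fun i => .inr (.inl i) ∈ M

/-- Block `b` is the triangle on `u_{3b}, u_{3b+1}, u_{3b+2}` (`0`-based); `inBit M b` records
the path edge `u_{3b-1} u_{3b}` entering it, with no such edge for `b = 0`. -/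
def inBit : ℕ → Bool
  | 0 => false
  | b + 1 => pathBit M (3 * b + 2)

lemma degIn_inl (u : Fin (6 * k)) :
    degIn (coreEnds k) M (.inl u) =
      (pathBit M u).toNat + (decide (1 ≤ u.val) && pathBit M (u - 1)).toNat +
        (decide (u.val % 3 = 0) && chordBit M (u / 3)).toNat +
        (decide (u.val % 3 = 2) && chordBit M (u / 3)).toNat +
        (decide (u.val % 6 = 1) && uwBit M (u / 6)).toNat := by
  simp only [degIn_eq_sum, Fintype.sum_sum_type, coreEnds, Sum.inl.injEq, reduceCtorEq,
    and_false, if_false, Fin.ext_iff, sum_add_distrib, sum_const_zero, add_zero]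
  rw [sum_ite_and_val_eq,
    sum_ite_and_eq _ (φ := fun x => x + 1) (P := 1 ≤ u.val) (j₀ := u - 1) (by omega),
    sum_ite_and_eq _ (φ := fun x => 3 * x) (P := u.val % 3 = 0) (j₀ := u / 3) (by omega),
    sum_ite_and_eq _ (φ := fun x => 3 * x + 2) (P := u.val % 3 = 2) (j₀ := u / 3) (by omega),
    sum_ite_and_eq _ (φ := fun x => 6 * x + 1) (P := u.val % 6 = 1) (j₀ := u / 6) (by omega)]
  simp only [pathBit, chordBit, uwBit]
  ring

lemma degIn_inr_inl (i : Fin k) :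
    degIn (coreEnds k) M (.inr (.inl i)) =
      (decide (.inr (.inl i) ∈ M)).toNat + (decide (.inr (.inr i) ∈ M)).toNat := by
  simp only [degIn_eq_sum, Fintype.sum_sum_type, coreEnds, Sum.inr.injEq, Sum.inl.injEq,
    reduceCtorEq, and_false, if_false, Fin.ext_iff, sum_add_distrib, sum_const_zero, add_zero,
    zero_add, sum_ite_and_val_eq, natBit_val]
  exact add_comm _ _

lemma degIn_inr_inr (i : Fin k) :
    degIn (coreEnds k) M (.inr (.inr i)) = (decide (.inr (.inr i) ∈ M)).toNat := by
  simp only [degIn_eq_sum, Fintype.sum_sum_type, coreEnds, Sum.inr.injEq, reduceCtorEq,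
    and_false, if_false, Fin.ext_iff, sum_add_distrib, sum_const_zero, add_zero, zero_add,
    sum_ite_and_val_eq, natBit_val]

lemma degIn_three_mul {b : ℕ} (hb : b < 2 * k) :
    degIn (coreEnds k) M (.inl ⟨3 * b, by omega⟩) =
      (inBit M b).toNat + (pathBit M (3 * b)).toNat + (chordBit M b).toNat := by
  rw [degIn_inl]
  rcases b with _ | b
  · simp [inBit]
  · simp [inBit, show 3 * (b + 1) - 1 = 3 * b + 2 by omega, show 1 ≤ 3 * (b + 1) by omega,
      show (3 * (b + 1)) % 6 ≠ 1 by omega]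
    ring

lemma degIn_three_mul_add_one {b : ℕ} (hb : b < 2 * k) :
    degIn (coreEnds k) M (.inl ⟨3 * b + 1, by omega⟩) =
      (pathBit M (3 * b)).toNat + (pathBit M (3 * b + 1)).toNat +
        (decide (b % 2 = 0) && uwBit M (b / 2)).toNat := by
  rw [degIn_inl]
  simp [show (3 * b + 1) % 6 = 1 ↔ b % 2 = 0 by omega, show (3 * b + 1) / 6 = b / 2 by omega,
    show (3 * b + 1) % 3 = 1 by omega]
  ring

lemma degIn_three_mul_add_two {b : ℕ} (hb : b < 2 * k) :
    degIn (coreEnds k) M (.inl ⟨3 * b + 2, by omega⟩) =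
      (pathBit M (3 * b + 1)).toNat + (chordBit M b).toNat + (inBit M (b + 1)).toNat := by
  rw [degIn_inl]
  simp [inBit, show (3 * b + 2) % 6 ≠ 1 by omega, show (3 * b + 2) / 3 = b by omega,
    show (3 * b + 2) % 3 = 2 by omega]
  ring

lemma inBit_two_mul_self : inBit M (2 * k) = false := by
  rcases k with _ | k
  · rfl
  · show pathBit M (3 * (2 * k + 1) + 2) = false
    exact natBit_of_le _ (by omega)

end degrees

section coreMatching
variable {k : ℕ} (A : Finset (Fin k))

def middleCoveredBit (b : ℕ) : Bool := decide (b % 2 = 0) && natBit (· ∈ A) (b / 2)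

def carry : ℕ → Bool
  | 0 => false
  | b + 1 => carry b == middleCoveredBit A b

lemma carry_two_mul (j : ℕ) :
    carry A (2 * j) = decide (Odd (∑ i ∈ range j, (natBit (· ∈ A) i).toNat)) := by
  induction j with
  | zero => simp [carry]
  | succ j ih =>
    rw [show 2 * (j + 1) = 2 * j + 1 + 1 by ring, carry, carry, ih, sum_range_succ]
    simp only [middleCoveredBit, show (2 * j + 1) % 2 = 1 by omega,
      Nat.mul_div_cancel_left j two_pos]
    cases natBit (· ∈ A) j <;> simp [← Nat.not_even_iff_odd, Nat.even_add_one]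

lemma carry_two_mul_self : carry A (2 * k) = decide (Odd #A) := by
  rw [carry_two_mul, sum_natBit_toNat, filter_univ_mem]

def corePathBit (j : ℕ) : Bool :=
  if j % 3 = 0 then !carry A (j / 3) && !middleCoveredBit A (j / 3)
  else if j % 3 = 1 then carry A (j / 3) && !middleCoveredBit A (j / 3)
  else carry A (j / 3 + 1)

def coreChordBit (b : ℕ) : Bool := !carry A b && middleCoveredBit A b

def coreMatchingBit : CoreEdge k → Bool
  | .inl (.inl j) => corePathBit A j
  | .inl (.inr b) => coreChordBit A b
  | .inr (.inl i) => decide (i ∈ A)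
  | .inr (.inr i) => decide (i ∉ A)

def coreMatching : Finset (CoreEdge k) := {e | coreMatchingBit A e}

lemma pathBit_coreMatching {j : ℕ} (hj : j < 6 * k - 1) :
    pathBit (coreMatching A) j = corePathBit A j := by
  simp [pathBit, natBit, hj, coreMatching, coreMatchingBit]

lemma chordBit_coreMatching {b : ℕ} (hb : b < 2 * k) :
    chordBit (coreMatching A) b = coreChordBit A b := by
  simp [chordBit, natBit, hb, coreMatching, coreMatchingBit]

@[simp]
lemma inr_inl_mem_coreMatching (i : Fin k) : .inr (.inl i) ∈ coreMatching A ↔ i ∈ A := by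
  simp [coreMatching, coreMatchingBit]

@[simp]
lemma inr_inr_mem_coreMatching (i : Fin k) : .inr (.inr i) ∈ coreMatching A ↔ i ∉ A := by
  simp [coreMatching, coreMatchingBit]

lemma uwBit_coreMatching : uwBit (coreMatching A) = natBit (· ∈ A) :=
  (natBit_eq_natBit_iff _ _).2 (inr_inl_mem_coreMatching A)

lemma inBit_coreMatching (hA : Even #A) {b : ℕ} (hb : b ≤ 2 * k) :
    inBit (coreMatching A) b = carry A b := by
  rcases b with _ | b
  · rfl
  · rcases hb.lt_or_eq with hb | hb
    · rw [inBit, pathBit_coreMatching A (by omega)]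
      simp [corePathBit, show (3 * b + 2) % 3 = 2 by omega, show (3 * b + 2) / 3 = b by omega]
    · rw [hb, inBit_two_mul_self, carry_two_mul_self]
      simpa using hA

lemma block_balanced_iff (M : Finset (CoreEdge k)) {b : ℕ} (hb : b < 2 * k)
    (hin : inBit M b = carry A b) (huw : uwBit M = natBit (· ∈ A)) :
    (degIn (coreEnds k) M (.inl ⟨3 * b, by omega⟩) = 1 ∧
        degIn (coreEnds k) M (.inl ⟨3 * b + 1, by omega⟩) = 1 ∧
        degIn (coreEnds k) M (.inl ⟨3 * b + 2, by omega⟩) = 1) ↔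
      (pathBit M (3 * b) = corePathBit A (3 * b) ∧
        pathBit M (3 * b + 1) = corePathBit A (3 * b + 1) ∧
        chordBit M b = coreChordBit A b ∧ inBit M (b + 1) = carry A (b + 1)) := by
  rw [degIn_three_mul M hb, degIn_three_mul_add_one M hb, degIn_three_mul_add_two M hb, hin, huw,
    triangle_degree_eq_one_iff]
  simp [corePathBit, coreChordBit, carry, middleCoveredBit, show (3 * b + 1) % 3 = 1 by omega,
    show (3 * b + 1) / 3 = b by omega]

end coreMatching

section matching
variable {k : ℕ} (A : Finset (Fin k)) (M : Finset (CoreEdge k))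

def IsCoreMatchingAvoiding : Prop :=
  ∀ v : CoreVert k,
    degIn (coreEnds k) M v = if (∃ i ∈ A, v = Sum.inr (Sum.inr i)) then 0 else 1

lemma forall_degIn_inl_iff :
    (∀ u : Fin (6 * k), degIn (coreEnds k) M (.inl u) = 1) ↔
      ∀ b (hb : b < 2 * k), degIn (coreEnds k) M (.inl ⟨3 * b, by omega⟩) = 1 ∧
        degIn (coreEnds k) M (.inl ⟨3 * b + 1, by omega⟩) = 1 ∧
        degIn (coreEnds k) M (.inl ⟨3 * b + 2, by omega⟩) = 1 := by
  refine ⟨fun h b _ => ⟨h _, h _, h _⟩, ?_⟩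
  rintro h ⟨n, hn⟩
  obtain ⟨b, r, hr, rfl⟩ : ∃ b r, r < 3 ∧ n = 3 * b + r :=
    ⟨n / 3, n % 3, by omega, by omega⟩
  interval_cases r
  exacts [(h b (by omega)).1, (h b (by omega)).2.1, (h b (by omega)).2.2]

lemma degIn_inr_iff (i : Fin k) :
    (degIn (coreEnds k) M (.inr (.inl i)) = 1 ∧
        degIn (coreEnds k) M (.inr (.inr i)) = if i ∈ A then 0 else 1) ↔
      ((.inr (.inl i) ∈ M ↔ i ∈ A) ∧ (.inr (.inr i) ∈ M ↔ i ∉ A)) := by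
  rw [degIn_inr_inl, degIn_inr_inr]
  by_cases hw : .inr (.inl i) ∈ M <;> by_cases ht : .inr (.inr i) ∈ M <;>
    by_cases hi : i ∈ A <;> simp [hw, ht, hi]

lemma isCoreMatchingAvoiding_iff :
    IsCoreMatchingAvoiding A M ↔
      (∀ b (hb : b < 2 * k), degIn (coreEnds k) M (.inl ⟨3 * b, by omega⟩) = 1 ∧
        degIn (coreEnds k) M (.inl ⟨3 * b + 1, by omega⟩) = 1 ∧
        degIn (coreEnds k) M (.inl ⟨3 * b + 2, by omega⟩) = 1) ∧
      (∀ i, .inr (.inl i) ∈ M ↔ i ∈ A) ∧ (∀ i, .inr (.inr i) ∈ M ↔ i ∉ A) := by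
  simp only [IsCoreMatchingAvoiding, Sum.forall, ← forall_degIn_inl_iff, ← forall_and,
    ← degIn_inr_iff]
  simp

lemma isCoreMatchingAvoiding_coreMatching (hA : Even #A) :
    IsCoreMatchingAvoiding A (coreMatching A) := by
  refine (isCoreMatchingAvoiding_iff A _).2 ⟨fun b hb => ?_, by simp, by simp⟩
  exact (block_balanced_iff A _ hb (inBit_coreMatching A hA hb.le) (uwBit_coreMatching A)).2
    ⟨pathBit_coreMatching A (by omega), pathBit_coreMatching A (by omega),
      chordBit_coreMatching A hb, inBit_coreMatching A hA hb⟩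

namespace IsCoreMatchingAvoiding
variable {A M}

lemma uwBit_eq (hM : IsCoreMatchingAvoiding A M) : uwBit M = natBit (· ∈ A) :=
  (natBit_eq_natBit_iff _ _).2 ((isCoreMatchingAvoiding_iff A M).1 hM).2.1

lemma inBit_eq_carry (hM : IsCoreMatchingAvoiding A M) {b : ℕ} (hb : b ≤ 2 * k) :
    inBit M b = carry A b := by
  induction b with
  | zero => rfl
  | succ b ih =>
    exact ((block_balanced_iff A M hb (ih (by omega)) hM.uwBit_eq).1
      (((isCoreMatchingAvoiding_iff A M).1 hM).1 b hb)).2.2.2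

lemma block_eq (hM : IsCoreMatchingAvoiding A M) {b : ℕ} (hb : b < 2 * k) :
    pathBit M (3 * b) = corePathBit A (3 * b) ∧
      pathBit M (3 * b + 1) = corePathBit A (3 * b + 1) ∧
      chordBit M b = coreChordBit A b ∧ inBit M (b + 1) = carry A (b + 1) :=
  (block_balanced_iff A M hb (hM.inBit_eq_carry hb.le) hM.uwBit_eq).1
    (((isCoreMatchingAvoiding_iff A M).1 hM).1 b hb)

lemma pathBit_eq (hM : IsCoreMatchingAvoiding A M) {j : ℕ} (hj : j < 6 * k - 1) :
    pathBit M j = corePathBit A j := by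
  obtain ⟨b, r, hr, rfl⟩ : ∃ b r, r < 3 ∧ j = 3 * b + r :=
    ⟨j / 3, j % 3, by omega, by omega⟩
  interval_cases r
  · exact (hM.block_eq (by omega)).1
  · exact (hM.block_eq (by omega)).2.1
  · rw [show pathBit M (3 * b + 2) = inBit M (b + 1) from rfl, hM.inBit_eq_carry (by omega)]
    simp [corePathBit, show (3 * b + 2) % 3 = 2 by omega, show (3 * b + 2) / 3 = b by omega]

lemma eq_coreMatching (hM : IsCoreMatchingAvoiding A M) : M = coreMatching A := by
  ext e
  rcases e with (j | b) | (i | i)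
  · simpa [pathBit, natBit_val] using
      (hM.pathBit_eq j.isLt).trans (pathBit_coreMatching A j.isLt).symm
  · simpa [chordBit, natBit_val] using
      (hM.block_eq b.isLt).2.2.1.trans (chordBit_coreMatching A b.isLt).symm
  · simpa using ((isCoreMatchingAvoiding_iff A M).1 hM).2.1 i
  · simpa using ((isCoreMatchingAvoiding_iff A M).1 hM).2.2 i

lemma even_card (hM : IsCoreMatchingAvoiding A M) : Even #A := by
  have h := hM.inBit_eq_carry le_rfl
  rw [inBit_two_mul_self, carry_two_mul_self] at h
  simpa using h

end IsCoreMatchingAvoiding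

end matching

open scoped Classical in
theorem core_matching_extension_general (k : ℕ) (A : Finset (Fin k)) :
    (Even A.card → ∃! M : Finset (CoreEdge k),
        ∀ v : CoreVert k,
          degIn (coreEnds k) M v = if (∃ i ∈ A, v = Sum.inr (Sum.inr i)) then 0 else 1) ∧
    (¬ Even A.card → ¬ ∃ M : Finset (CoreEdge k),
        ∀ v : CoreVert k,
          degIn (coreEnds k) M v = if (∃ i ∈ A, v = Sum.inr (Sum.inr i)) then 0 else 1) :=
  ⟨fun hA => ⟨coreMatching A, isCoreMatchingAvoiding_coreMatching A hA,
      fun _ hM => IsCoreMatchingAvoiding.eq_coreMatching hM⟩,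
    fun hA ⟨_, hM⟩ => hA (IsCoreMatchingAvoiding.even_card hM)⟩

open scoped Classical in
/-- Observation 3.4 of the paper: for every subset `A` of `{t_1, …, t_k}`,
if `|A|` is even there is exactly one matching of the core `S′` covering every vertex not
in `A` exactly once and covering no vertex of `A`, and if `|A|` is odd there is none. -/
theorem core_matching_extension (k : ℕ) (hk : 1 ≤ k) (A : Finset (Fin k)) :
    (Even A.card → ∃! M : Finset (CoreEdge k),
        ∀ v : CoreVert k,
          degIn (coreEnds k) M v = if (∃ i ∈ A, v = Sum.inr (Sum.inr i)) then 0 else 1) ∧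
    (¬ Even A.card → ¬ ∃ M : Finset (CoreEdge k),
        ∀ v : CoreVert k,
          degIn (coreEnds k) M v = if (∃ i ∈ A, v = Sum.inr (Sum.inr i)) then 0 else 1) :=
  core_matching_extension_general k A
end

section
/- Let n ≥ 1 and let a_1, …, a_{2n} be nonzero complex numbers with a_1 + ⋯ + a_{2n} = 1. Then for every δ > 0 there exists c > 0 such that for every positive integer N, every integer k, and every z ∈ ℂ with |z| < cN satisfying Σ_{i=1}^{n} ( Log(1 + a_{2i−1}·z/N) − Log(1 − a_{2i}·z/N) ) = (2k+1)πi/N, one has |z − (2k+1)πi| < δ·|2k+1|. (This is Lemma 5.2 of the paper: for |z| < cN, all solutions of the finite-lattice equation are of the form z_k = (2k+1)πi + ε_k with ε_k small.) -/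
/-!
Put `F(t) = Σ_i (Log(1 + a_{2i-1} t) - Log(1 - a_{2i} t))`. Since `|Log(1 + u) - u| ≤ |u|²` for
`|u| ≤ 1/2` and `Σ a_i = 1`, we get `|F(t) - t| ≤ S |t|²` with `S = Σ |a_i|²`. The equation says
`F(z/N) = w/N` with `w = (2k+1)πi`, so `|z - w| ≤ S |z|²/N ≤ S c |z|`; once `S c ≤ 1/2` this turns
into `|z - w| ≤ 2 S c |w| = 2 S c π |2k+1|`, and `c` is chosen to make `2 S c π` small.
-/

open Complex

theorem Fin.sum_univ_pairs {M : Type*} [AddCommMonoid M] {n : ℕ} (f : Fin (2 * n) → M) :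
    ∑ i : Fin n, (f ⟨2 * i, by omega⟩ + f ⟨2 * i + 1, by omega⟩) = ∑ j, f j := by
  rw [← (finProdFinEquiv.trans (finCongr (Nat.mul_comm n 2))).sum_comp, Fintype.sum_prod_type]
  refine Finset.sum_congr rfl fun i _ => ?_
  rw [Fin.sum_univ_two]
  congr 2 <;> simp [finProdFinEquiv]; ring

theorem norm_sub_le_two_mul_of_norm_sub_le {E : Type*} [SeminormedAddCommGroup E] {z w : E}
    {ε : ℝ} (hε₀ : 0 ≤ ε) (hε : ε ≤ 1 / 2) (h : ‖z - w‖ ≤ ε * ‖z‖) :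
    ‖z - w‖ ≤ 2 * ε * ‖w‖ := by
  have hz : ‖z‖ ≤ ‖w‖ + ‖z - w‖ := norm_le_insert' z w
  nlinarith [mul_le_mul_of_nonneg_left hz hε₀, norm_nonneg (z - w)]

theorem Complex.norm_log_one_add_sub_self_le_sq {u : ℂ} (hu : ‖u‖ ≤ 1 / 2) :
    ‖log (1 + u) - u‖ ≤ ‖u‖ ^ 2 := by
  have hinv : (1 - ‖u‖)⁻¹ ≤ 2 := by
    rw [inv_le_comm₀ (by linarith) two_pos]
    linarith
  calc ‖log (1 + u) - u‖ ≤ ‖u‖ ^ 2 * (1 - ‖u‖)⁻¹ / 2 :=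
        norm_log_one_add_sub_self_le (hu.trans_lt one_half_lt_one)
    _ ≤ ‖u‖ ^ 2 * 2 / 2 := by gcongr
    _ = ‖u‖ ^ 2 := by ring

noncomputable def pairedLogSum {n : ℕ} (a : Fin (2 * n) → ℂ) (t : ℂ) : ℂ :=
  ∑ i : Fin n, (log (1 + a ⟨2 * i, by omega⟩ * t) - log (1 - a ⟨2 * i + 1, by omega⟩ * t))

theorem norm_pairedLogSum_sub_le {n : ℕ} (a : Fin (2 * n) → ℂ) {t : ℂ}
    (ht : ∀ i, ‖a i * t‖ ≤ 1 / 2) :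
    ‖pairedLogSum a t - (∑ i, a i) * t‖ ≤ (∑ i, ‖a i‖ ^ 2) * ‖t‖ ^ 2 := by
  have hneg : ∀ i, ‖log (1 + -(a i * t)) - -(a i * t)‖ ≤ ‖a i * t‖ ^ 2 := fun i => by
    simpa only [norm_neg] using
      norm_log_one_add_sub_self_le_sq (u := -(a i * t)) (by simpa using ht i)
  calc ‖pairedLogSum a t - (∑ i, a i) * t‖
      = ‖∑ i : Fin n, ((log (1 + a ⟨2 * i, by omega⟩ * t) - a ⟨2 * i, by omega⟩ * t) -
          (log (1 + -(a ⟨2 * i + 1, by omega⟩ * t)) - -(a ⟨2 * i + 1, by omega⟩ * t)))‖ := by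
        rw [Finset.sum_mul, ← Fin.sum_univ_pairs, pairedLogSum, ← Finset.sum_sub_distrib]
        congr! 2 with i
        ring_nf
    _ ≤ ∑ i : Fin n, (‖a ⟨2 * i, by omega⟩ * t‖ ^ 2 + ‖a ⟨2 * i + 1, by omega⟩ * t‖ ^ 2) :=
        (norm_sum_le _ _).trans <| Finset.sum_le_sum fun i _ =>
          (norm_sub_le _ _).trans (add_le_add (norm_log_one_add_sub_self_le_sq (ht _)) (hneg _))
    _ = (∑ i, ‖a i‖ ^ 2) * ‖t‖ ^ 2 := by
        simp only [Finset.sum_mul, ← Fin.sum_univ_pairs, norm_mul, mul_pow, add_mul]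

theorem norm_sub_le_of_pairedLogSum_div_eq {n : ℕ} (a : Fin (2 * n) → ℂ) (hsum : ∑ i, a i = 1)
    {c : ℝ} (hc : ∀ i, ‖a i‖ * c ≤ 1 / 2) {N : ℕ} (hN : 0 < N) {z w : ℂ} (hz : ‖z‖ ≤ c * N)
    (h : pairedLogSum a (z / N) = w / N) : ‖z - w‖ ≤ (∑ i, ‖a i‖ ^ 2) * c * ‖z‖ := by
  have hN' : (0 : ℝ) < N := Nat.cast_pos.2 hN
  have ht : ‖z / N‖ ≤ c := by
    rwa [norm_div, Complex.norm_natCast, div_le_iff₀ hN']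
  have hkey := norm_pairedLogSum_sub_le a fun i =>
    (norm_mul_le _ _).trans <| (mul_le_mul_of_nonneg_left ht (norm_nonneg _)).trans (hc i)
  rw [hsum, one_mul, h, ← sub_div, norm_div, Complex.norm_natCast, norm_sub_rev,
    div_le_iff₀ hN'] at hkey
  calc ‖z - w‖ ≤ (∑ i, ‖a i‖ ^ 2) * ‖z / N‖ ^ 2 * N := hkey
    _ = (∑ i, ‖a i‖ ^ 2) * ‖z / N‖ * ‖z‖ := by
        rw [norm_div, Complex.norm_natCast]
        field_simp
    _ ≤ (∑ i, ‖a i‖ ^ 2) * c * ‖z‖ := by gcongr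

theorem exists_pos_norm_sub_le_of_pairedLogSum_div_eq {n : ℕ} (a : Fin (2 * n) → ℂ)
    (hsum : ∑ i, a i = 1) {η : ℝ} (hη : 0 < η) (hη' : η ≤ 1 / 2) :
    ∃ c : ℝ, 0 < c ∧ ∀ N : ℕ, 0 < N → ∀ z w : ℂ, ‖z‖ < c * N →
      pairedLogSum a (z / N) = w / N → ‖z - w‖ ≤ 2 * η * ‖w‖ := by
  set S := ∑ i, ‖a i‖ ^ 2
  set K := 1 + ∑ i, ‖a i‖ + S
  have hK : 0 < K := by positivity
  have hmul_le : ∀ x, 0 ≤ x → x ≤ K → x * (η / K) ≤ η := fun x hx hxK => by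
    calc x * (η / K) ≤ K * (η / K) := by gcongr
      _ = η := by field_simp
  have hc : ∀ i, ‖a i‖ * (η / K) ≤ 1 / 2 := fun i =>
    (hmul_le _ (norm_nonneg _) (by
      linarith [Finset.single_le_sum (fun j _ => norm_nonneg (a j)) (Finset.mem_univ i),
        (by positivity : 0 ≤ S)])).trans hη'
  have hSc : S * (η / K) ≤ η :=
    hmul_le _ (by positivity) (by linarith [(by positivity : 0 ≤ ∑ i, ‖a i‖)])
  refine ⟨η / K, by positivity, fun N hN z w hz h => ?_⟩
  calc ‖z - w‖ ≤ 2 * (S * (η / K)) * ‖w‖ :=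
        norm_sub_le_two_mul_of_norm_sub_le (by positivity) (hSc.trans hη')
          (norm_sub_le_of_pairedLogSum_div_eq a hsum hc hN hz.le h)
    _ ≤ 2 * η * ‖w‖ := by gcongr

/-- Lemma 5.2 of the paper: let `a_1, …, a_{2n}` be nonzero complex numbers with
sum `1`. For every `δ > 0` there is `c > 0` such that for every positive integer `N`, every
integer `k` and every `z` with `|z| < cN` solving
`Σ_i (Log(1 + a_{2i−1} z/N) − Log(1 − a_{2i} z/N)) = (2k+1)πi/N`, one has
`|z − (2k+1)πi| < δ·|2k+1|`. -/
theorem solutions_near_odd_multiples (n : ℕ)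
    (a : Fin (2 * n) → ℂ) (hsum : ∑ i, a i = 1) :
    ∀ δ : ℝ, 0 < δ → ∃ c : ℝ, 0 < c ∧
      ∀ N : ℕ, 0 < N → ∀ k : ℤ, ∀ z : ℂ,
        ‖z‖ < c * N →
        (∑ i : Fin n,
            (Complex.log (1 + a ⟨2 * i.val, by have := i.isLt; omega⟩ * z / N) -
              Complex.log (1 - a ⟨2 * i.val + 1, by have := i.isLt; omega⟩ * z / N)) =
          ((2 * k + 1 : ℤ) : ℂ) * Real.pi * Complex.I / N) →
        ‖z - ((2 * k + 1 : ℤ) : ℂ) * Real.pi * Complex.I‖ <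
          δ * |((2 * k + 1 : ℤ) : ℝ)| := by
  intro δ hδ
  set η := min (1 / 2) (δ / (4 * Real.pi))
  obtain ⟨c, hc, hsol⟩ := exists_pos_norm_sub_le_of_pairedLogSum_div_eq a hsum
    (η := η) (by positivity) (min_le_left _ _)
  refine ⟨c, hc, fun N hN k z hz heq => ?_⟩
  set m : ℝ := ((2 * k + 1 : ℤ) : ℝ)
  set w : ℂ := ((2 * k + 1 : ℤ) : ℂ) * Real.pi * Complex.I
  have hw : ‖w‖ = Real.pi * |m| := by
    rw [norm_mul, norm_mul, Complex.norm_I, Complex.norm_intCast, Complex.norm_real,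
      Real.norm_eq_abs, abs_of_pos Real.pi_pos, mul_one, mul_comm]
  have hm : 1 ≤ |m| := by
    rw [← Int.cast_abs]
    exact_mod_cast Int.one_le_abs (by omega)
  have hηδ : 2 * η * Real.pi ≤ δ / 2 := by
    have := min_le_right (1 / 2 : ℝ) (δ / (4 * Real.pi))
    rw [le_div_iff₀ (by positivity)] at this
    linarith
  calc ‖z - w‖ ≤ 2 * η * ‖w‖ :=
        hsol N hN z w hz (by simpa only [pairedLogSum, mul_div_assoc] using heq)
    _ = 2 * η * Real.pi * |m| := by rw [hw]; ring
    _ ≤ δ / 2 * |m| := by gcongr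
    _ < δ * |m| := by linarith [mul_le_mul_of_nonneg_left hm hδ.le]
end
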